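/- arXiv:2406.11708 — 3 statements merged into one kernel-verified Lean document; each statement's English description precedes it below -/
import Mathlib

section
/- Let 0 < γ < 1, t > 0, and let f : [0,t] → ℝ be continuously differentiable. Then (1/Γ(1−γ)) ∫_0^t (t−τ)^{−γ} f′(τ) dτ = (1/Γ(1−γ)) [ (γ/(1−γ)) t^{1−γ} ∫_0^1 ((f(t) − f(t − tτ)) / (tτ)) · (1−γ) τ^{−γ} dτ + (f(t) − f(0)) t^{−γ} ], where (1−γ) τ^{−γ} on (0,1) is the probability density of the Beta(1−γ, 1) distribution. -/
/-!
Substituting `s = t - τ`, the Caputo integral becomes `∫₀ᵗ s^(-γ) g'(s) ds` with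
`g(s) = f(t) - f(t - s)`. Since `g(0) = 0` and `g'` is bounded, `|g(s)| ≤ M s`, so integrating by
parts against `s^(-γ)` produces no boundary term at `0` and yields the Marchaud form
`t^(-γ) g(t) + γ ∫₀ᵗ g(s) s^(-γ-1) ds`. Rescaling `s = t τ` turns the last integral into the
expectation against the Beta(1 - γ, 1) density.
-/

open MeasureTheory Real Set Filter Topology

lemma intervalIntegral_eq_integral_Ioo {a b : ℝ} (hab : a ≤ b) (f : ℝ → ℝ) :
    ∫ x in a..b, f x = ∫ x in Ioo a b, f x := by
  rw [intervalIntegral.integral_of_le hab, integral_Ioc_eq_integral_Ioo]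

lemma integral_Ioo_eq_mul_integral_Ioo_zero_one {t : ℝ} (ht : 0 < t) (F : ℝ → ℝ) :
    ∫ s in Ioo 0 t, F s = t * ∫ τ in Ioo 0 1, F (t * τ) := by
  rw [← intervalIntegral_eq_integral_Ioo ht.le, ← intervalIntegral_eq_integral_Ioo zero_le_one,
    intervalIntegral.integral_comp_mul_left F ht.ne', smul_eq_mul, mul_zero, mul_one,
    mul_inv_cancel_left₀ ht.ne']

lemma continuousOn_rpow_const_Ioo (t p : ℝ) : ContinuousOn (fun s : ℝ => s ^ p) (Ioo 0 t) :=
  fun s hs => (continuousAt_rpow_const s p (Or.inl hs.1.ne')).continuousWithinAt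

lemma integrableOn_Ioo_of_norm_le_mul_rpow {γ t M : ℝ} {h : ℝ → ℝ} (hγ : γ < 1)
    (hh : ContinuousOn h (Ioo 0 t)) (hle : ∀ s ∈ Ioo 0 t, ‖h s‖ ≤ M * s ^ (-γ)) :
    IntegrableOn h (Ioo 0 t) := by
  have hsub : Ioo 0 t ⊆ uIoc 0 t := fun s hs => by
    rw [uIoc_of_le (hs.1.trans hs.2).le]
    exact Ioo_subset_Ioc_self hs
  have hrpow : IntegrableOn (fun s : ℝ => s ^ (-γ)) (Ioo 0 t) :=
    (intervalIntegral.intervalIntegrable_rpow' (by linarith)).def'.mono_set hsub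
  exact (hrpow.const_mul M).mono' (hh.aestronglyMeasurable measurableSet_Ioo)
    ((ae_restrict_iff' measurableSet_Ioo).2 (ae_of_all _ hle))

lemma tendsto_rpow_neg_mul_nhdsGT_zero {γ t M : ℝ} {g : ℝ → ℝ} (hγ : γ < 1) (ht : 0 < t)
    (hg : ∀ s ∈ Ioo 0 t, |g s| ≤ M * s) :
    Tendsto (fun s => s ^ (-γ) * g s) (𝓝[>] 0) (𝓝 0) := by
  have hpow : Tendsto (fun s : ℝ => M * s ^ (-γ + 1)) (𝓝[>] 0) (𝓝 0) := by
    have : Tendsto (fun s : ℝ => M * s ^ (-γ + 1)) (𝓝[>] 0) (𝓝 (M * 0 ^ (-γ + 1))) :=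
      ((continuousAt_rpow_const 0 (-γ + 1) (Or.inr (by linarith))).tendsto.mono_left
        nhdsWithin_le_nhds).const_mul M
    rwa [zero_rpow (by linarith), mul_zero] at this
  refine squeeze_zero_norm' ?_ hpow
  filter_upwards [Ioo_mem_nhdsGT ht] with s hs
  rw [norm_mul, norm_of_nonneg (rpow_nonneg hs.1.le _), rpow_add_one hs.1.ne', norm_eq_abs]
  nlinarith [hg s hs, rpow_nonneg hs.1.le (-γ)]

theorem integral_rpow_neg_mul_deriv_eq {γ t : ℝ} {g g' : ℝ → ℝ} (hγ : γ < 1) (ht : 0 < t)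
    (hg : ∀ s ∈ Icc 0 t, HasDerivWithinAt g (g' s) (Icc 0 t) s)
    (hg' : ContinuousOn g' (Icc 0 t)) (hg0 : g 0 = 0) :
    ∫ s in Ioo 0 t, s ^ (-γ) * g' s = t ^ (-γ) * g t + γ * ∫ s in Ioo 0 t, g s * s ^ (-γ - 1) := by
  obtain ⟨M, hM⟩ := isCompact_Icc.exists_bound_of_continuousOn hg'
  have hlin : ∀ s ∈ Ioo 0 t, |g s| ≤ M * s := fun s hs => by
    have := (convex_Icc 0 t).norm_image_sub_le_of_norm_hasDerivWithin_le hg hM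
      (left_mem_Icc.2 ht.le) (Ioo_subset_Icc_self hs)
    rwa [hg0, sub_zero, sub_zero, norm_of_nonneg hs.1.le, norm_eq_abs] at this
  have hgc : ContinuousOn g (Icc 0 t) := fun s hs => (hg s hs).continuousWithinAt
  have hint₁ : IntegrableOn (fun s => s ^ (-γ) * g' s) (Ioo 0 t) := by
    refine integrableOn_Ioo_of_norm_le_mul_rpow (M := M) hγ
      ((continuousOn_rpow_const_Ioo t _).mul (hg'.mono Ioo_subset_Icc_self)) fun s hs => ?_
    rw [norm_mul, norm_of_nonneg (rpow_nonneg hs.1.le _), mul_comm]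
    exact mul_le_mul_of_nonneg_right (hM s (Ioo_subset_Icc_self hs)) (rpow_nonneg hs.1.le _)
  have hint₂ : IntegrableOn (fun s => g s * s ^ (-γ - 1)) (Ioo 0 t) := by
    refine integrableOn_Ioo_of_norm_le_mul_rpow (M := M) hγ
      ((hgc.mono Ioo_subset_Icc_self).mul (continuousOn_rpow_const_Ioo t _)) fun s hs => ?_
    have hpow : s * s ^ (-γ - 1) = s ^ (-γ) := by
      rw [mul_comm, ← rpow_add_one hs.1.ne', sub_add_cancel]
    rw [norm_mul, norm_of_nonneg (rpow_nonneg hs.1.le _), norm_eq_abs, ← hpow]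
    nlinarith [hlin s hs, rpow_nonneg hs.1.le (-γ - 1)]
  have hderiv : ∀ s ∈ Ioo 0 t, HasDerivAt (fun s => s ^ (-γ) * g s)
      (s ^ (-γ) * g' s - γ * (g s * s ^ (-γ - 1))) s := fun s hs => by
    have hgs := (hg s (Ioo_subset_Icc_self hs)).hasDerivAt (Icc_mem_nhds hs.1 hs.2)
    exact ((Real.hasDerivAt_rpow_const (Or.inl hs.1.ne')).mul hgs).congr_deriv (by ring)
  have hlim_t : Tendsto (fun s => s ^ (-γ) * g s) (𝓝[<] t) (𝓝 (t ^ (-γ) * g t)) := by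
    refine ((continuousAt_rpow_const t _ (Or.inl ht.ne')).tendsto.mono_left
      nhdsWithin_le_nhds).mul ?_
    rw [← nhdsWithin_Ioo_eq_nhdsLT ht]
    exact ((hgc t (right_mem_Icc.2 ht.le)).mono Ioo_subset_Icc_self).tendsto
  have hFTC := intervalIntegral.integral_eq_sub_of_hasDerivAt_of_tendsto ht hderiv
    ((intervalIntegrable_iff_integrableOn_Ioo_of_le ht.le).2 (hint₁.sub (hint₂.const_mul γ)))
    (tendsto_rpow_neg_mul_nhdsGT_zero hγ ht hlin) hlim_t
  rw [intervalIntegral_eq_integral_Ioo ht.le, integral_sub hint₁ (hint₂.const_mul γ),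
    integral_const_mul] at hFTC
  linarith

theorem integral_sub_rpow_neg_mul_deriv_eq {γ t : ℝ} {f f' : ℝ → ℝ} (hγ : γ < 1) (ht : 0 < t)
    (hf : ∀ τ ∈ Icc 0 t, HasDerivWithinAt f (f' τ) (Icc 0 t) τ)
    (hf' : ContinuousOn f' (Icc 0 t)) :
    ∫ τ in Ioo 0 t, (t - τ) ^ (-γ) * f' τ =
      γ * (∫ s in Ioo 0 t, (f t - f (t - s)) * s ^ (-γ - 1)) + (f t - f 0) * t ^ (-γ) := by
  have hmaps : MapsTo (fun s => t - s) (Icc 0 t) (Icc 0 t) :=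
    fun s hs => ⟨by linarith [hs.2], by linarith [hs.1]⟩
  have hreflect :
      ∫ τ in Ioo 0 t, (t - τ) ^ (-γ) * f' τ = ∫ s in Ioo 0 t, s ^ (-γ) * f' (t - s) := by
    have := intervalIntegral.integral_comp_sub_left (fun s => s ^ (-γ) * f' (t - s)) t
      (a := 0) (b := t)
    simp only [sub_sub_cancel, sub_self, sub_zero] at this
    rw [← intervalIntegral_eq_integral_Ioo ht.le, ← intervalIntegral_eq_integral_Ioo ht.le, this]
  have hg : ∀ s ∈ Icc 0 t,
      HasDerivWithinAt (fun s => f t - f (t - s)) (f' (t - s)) (Icc 0 t) s := fun s hs => by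
    simpa using ((hf (t - s) (hmaps hs)).comp s ((hasDerivWithinAt_id s _).const_sub t)
      hmaps).const_sub (f t)
  rw [hreflect, integral_rpow_neg_mul_deriv_eq hγ ht hg
    (hf'.comp (continuous_sub_left t).continuousOn hmaps) (by simp), sub_self]
  ring

theorem stmt_5_general {γ t : ℝ} (hγ1 : γ < 1) (ht : 0 < t)
    {f f' : ℝ → ℝ}
    (hf : ∀ τ ∈ Set.Icc 0 t, HasDerivWithinAt f (f' τ) (Set.Icc 0 t) τ)
    (hf' : ContinuousOn f' (Set.Icc 0 t)) :
    (1 / Real.Gamma (1 - γ)) * (∫ τ in Set.Ioo 0 t, (t - τ) ^ (-γ) * f' τ) =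
      (1 / Real.Gamma (1 - γ)) *
        ((γ / (1 - γ)) * t ^ (1 - γ) *
            (∫ τ in Set.Ioo (0 : ℝ) 1,
              ((f t - f (t - t * τ)) / (t * τ)) * ((1 - γ) * τ ^ (-γ)))
          + (f t - f 0) * t ^ (-γ)) := by
  rw [integral_sub_rpow_neg_mul_deriv_eq hγ1 ht hf hf',
    integral_Ioo_eq_mul_integral_Ioo_zero_one ht, ← mul_assoc, ← integral_const_mul,
    ← integral_const_mul]
  congr 2
  refine setIntegral_congr_fun measurableSet_Ioo fun τ hτ => ?_
  have h1γ : 1 - γ ≠ 0 := by linarith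
  have hτγ : τ ^ (-γ) = τ ^ (-γ - 1) * τ := by
    rw [← rpow_add_one hτ.1.ne', sub_add_cancel]
  have htγ : t ^ (1 - γ) = t ^ (-γ - 1) * t * t := by
    rw [← rpow_add_one ht.ne', ← rpow_add_one ht.ne']
    ring_nf
  rw [mul_rpow ht.le hτ.1.le, hτγ, htγ]
  have hτ0 : τ ≠ 0 := hτ.1.ne'
  field_simp

theorem stmt_5 {γ t : ℝ} (hγ : 0 < γ) (hγ1 : γ < 1) (ht : 0 < t)
    {f f' : ℝ → ℝ}
    (hf : ∀ τ ∈ Set.Icc 0 t, HasDerivWithinAt f (f' τ) (Set.Icc 0 t) τ)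
    (hf' : ContinuousOn f' (Set.Icc 0 t)) :
    (1 / Real.Gamma (1 - γ)) * (∫ τ in Set.Ioo 0 t, (t - τ) ^ (-γ) * f' τ) =
      (1 / Real.Gamma (1 - γ)) *
        ((γ / (1 - γ)) * t ^ (1 - γ) *
            (∫ τ in Set.Ioo (0 : ℝ) 1,
              ((f t - f (t - t * τ)) / (t * τ)) * ((1 - γ) * τ ^ (-γ)))
          + (f t - f 0) * t ^ (-γ)) :=
  stmt_5_general hγ1 ht hf hf'
end

section
/- Let 0 < γ ≤ γ_H < 1, t > 0, and let f : [0,t] → ℝ be continuously differentiable. Then ∫_0^t (t−τ)^{−γ} f′(τ) dτ = (γ/(1−γ_H)) t^{1−γ} ∫_0^1 τ^{γ_H−γ} ((f(t) − f(t − tτ))/(tτ)) · (1−γ_H) τ^{−γ_H} dτ + (f(t) − f(0)) t^{−γ}, where (1−γ_H) τ^{−γ_H} on (0,1) is the probability density of the Beta(1−γ_H, 1) distribution. -/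
/-!
Integrate by parts against `G σ = (t - σ)^(-γ) (f σ - f t)`. Because `f` is Lipschitz, `G` is
`O((t - σ)^(1-γ))` and so vanishes at `σ = t`, and its derivative is integrable. This gives the
Marchaud form `∫₀ᵗ (t-σ)^(-γ) f' = γ ∫₀ᵗ (t-σ)^(-γ-1) (f t - f σ) + (f t - f 0) t^(-γ)`. The
substitution `σ = t - tτ` then turns the Marchaud integral into the Beta-weighted one, since
`τ^(γH-γ) τ^(-γH) = τ^(-γ)`.
-/

open MeasureTheory Real Set

lemma exists_abs_sub_le_mul_sub {f f' : ℝ → ℝ} {a b : ℝ}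
    (hf : ∀ x ∈ Icc a b, HasDerivWithinAt f (f' x) (Icc a b) x)
    (hf' : ContinuousOn f' (Icc a b)) :
    ∃ C, ∀ σ ∈ Icc a b, |f b - f σ| ≤ C * (b - σ) := by
  obtain ⟨C, hC⟩ := isCompact_Icc.exists_bound_of_continuousOn hf'
  refine ⟨C, fun σ hσ => ?_⟩
  have hb : b ∈ Icc a b := right_mem_Icc.2 (hσ.1.trans hσ.2)
  simpa [abs_of_nonneg (sub_nonneg.2 hσ.2)] using
    (convex_Icc a b).norm_image_sub_le_of_norm_hasDerivWithin_le hf hC hσ hb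

lemma rpow_mul_abs_le_of_abs_le {x d C : ℝ} (hx : 0 < x) (h : |d| ≤ C * x) (r : ℝ) :
    x ^ r * |d| ≤ C * x ^ (r + 1) := by
  rw [rpow_add_one hx.ne', mul_left_comm]
  exact mul_le_mul_of_nonneg_left h (rpow_nonneg hx.le r)

lemma intervalIntegrable_sub_rpow {r : ℝ} (hr : -1 < r) (a b : ℝ) :
    IntervalIntegrable (fun σ => (b - σ) ^ r) volume a b := by
  simpa using
    ((intervalIntegral.intervalIntegrable_rpow' (a := 0) (b := b - a) hr).comp_sub_left b).symm

section LipschitzAtEndpoint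

variable {f : ℝ → ℝ} {a b γ C : ℝ}

lemma intervalIntegrable_sub_rpow_mul_sub (hab : a ≤ b) (hγ : γ < 1)
    (hf : ContinuousOn f (Icc a b)) (hC : ∀ σ ∈ Icc a b, |f b - f σ| ≤ C * (b - σ)) :
    IntervalIntegrable (fun σ => (b - σ) ^ (-γ - 1) * (f b - f σ)) volume a b := by
  refine ((intervalIntegrable_sub_rpow (neg_lt_neg hγ) a b).const_mul C).mono_fun ?_ ?_
  · rw [uIoc_of_le hab, Measure.restrict_congr_set Ioo_ae_eq_Ioc.symm]
    refine ContinuousOn.aestronglyMeasurable ?_ measurableSet_Ioo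
    refine ContinuousOn.mul (fun x hx => ?_)
      (continuousOn_const.sub (hf.mono Ioo_subset_Icc_self))
    exact ((continuousAt_const.sub continuousAt_id).rpow_const
      (Or.inl (sub_ne_zero.2 hx.2.ne'))).continuousWithinAt
  · rw [uIoc_of_le hab]
    refine (ae_restrict_iff' measurableSet_Ioc).2 (ae_of_all _ fun σ hσ => ?_)
    rcases hσ.2.lt_or_eq with hσb | rfl
    · have hpos : 0 < b - σ := sub_pos.2 hσb
      simpa [abs_mul, abs_of_pos (rpow_pos_of_pos hpos _)] using
        (rpow_mul_abs_le_of_abs_le hpos (hC σ (Ioc_subset_Icc_self hσ)) (-γ - 1)).trans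
          (le_abs_self _)
    · simp only [sub_self, mul_zero, norm_zero]
      positivity

lemma continuousWithinAt_sub_rpow_mul_sub (hγ : γ < 1)
    (hC : ∀ σ ∈ Icc a b, |f b - f σ| ≤ C * (b - σ)) :
    ContinuousWithinAt (fun σ => (b - σ) ^ (-γ) * (f σ - f b)) (Icc a b) b := by
  have hexp : (0 : ℝ) < -γ + 1 := by linarith
  have hlim : Filter.Tendsto (fun σ => C * (b - σ) ^ (-γ + 1)) (nhdsWithin b (Icc a b))
      (nhds 0) := by
    have := (((continuous_const (y := b)).sub continuous_id).rpow_const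
      (fun _ => Or.inr hexp.le) |>.const_mul C).tendsto b
    simpa [zero_rpow hexp.ne'] using this.mono_left nhdsWithin_le_nhds
  rw [ContinuousWithinAt, sub_self, sub_self, mul_zero]
  refine squeeze_zero_norm' ?_ hlim
  filter_upwards [self_mem_nhdsWithin] with σ hσ
  rcases hσ.2.lt_or_eq with hσb | rfl
  · have hpos : 0 < b - σ := sub_pos.2 hσb
    simpa [abs_mul, abs_of_pos (rpow_pos_of_pos hpos _), abs_sub_comm (f σ)] using
      rpow_mul_abs_le_of_abs_le hpos (hC σ hσ) (-γ)
  · simp [zero_rpow hexp.ne']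

end LipschitzAtEndpoint

theorem integral_sub_rpow_mul_deriv {f f' : ℝ → ℝ} {a b γ : ℝ} (hab : a ≤ b) (hγ : γ < 1)
    (hf : ∀ x ∈ Icc a b, HasDerivWithinAt f (f' x) (Icc a b) x)
    (hf' : ContinuousOn f' (Icc a b)) :
    ∫ σ in a..b, (b - σ) ^ (-γ) * f' σ =
      γ * (∫ σ in a..b, (b - σ) ^ (-γ - 1) * (f b - f σ)) + (f b - f a) * (b - a) ^ (-γ) := by
  obtain ⟨C, hC⟩ := exists_abs_sub_le_mul_sub hf hf'
  have hfc : ContinuousOn f (Icc a b) := fun x hx => (hf x hx).continuousWithinAt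
  set G : ℝ → ℝ := fun σ => (b - σ) ^ (-γ) * (f σ - f b)
  have hG_cont : ContinuousOn G (Icc a b) := by
    intro x hx
    rcases hx.2.lt_or_eq with hxb | rfl
    · exact (((continuousAt_const.sub continuousAt_id).rpow_const
        (Or.inl (sub_ne_zero.2 hxb.ne'))).continuousWithinAt).mul
        ((hfc x hx).sub continuousWithinAt_const)
    · exact continuousWithinAt_sub_rpow_mul_sub hγ hC
  have hG_deriv : ∀ x ∈ Ioo a b, HasDerivAt G
      (-(γ * ((b - x) ^ (-γ - 1) * (f b - f x))) + (b - x) ^ (-γ) * f' x) x := by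
    intro x hx
    have hfx : HasDerivAt f (f' x) x := (hf x (Ioo_subset_Icc_self hx)).hasDerivAt
      (Icc_mem_nhds hx.1 hx.2)
    refine ((((hasDerivAt_id x).const_sub b).rpow_const (p := -γ)
      (Or.inl (sub_ne_zero.2 hx.2.ne'))).mul (hfx.sub_const (f b))).congr_deriv ?_
    simp only [id]
    ring
  have hkernel := intervalIntegrable_sub_rpow (neg_lt_neg hγ) a b
  have hmarchaud := intervalIntegrable_sub_rpow_mul_sub hab hγ hfc hC
  have hdiff : IntervalIntegrable (fun σ => -(γ * ((b - σ) ^ (-γ - 1) * (f b - f σ))))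
      volume a b := (hmarchaud.const_mul γ).neg
  have hcaputo : IntervalIntegrable (fun σ => (b - σ) ^ (-γ) * f' σ) volume a b :=
    hkernel.mul_continuousOn (by rwa [uIcc_of_le hab])
  have hFTC := intervalIntegral.integral_eq_sub_of_hasDeriv_right_of_le hab hG_cont
    (fun x hx => (hG_deriv x hx).hasDerivWithinAt) (hdiff.add hcaputo)
  rw [intervalIntegral.integral_add hdiff hcaputo, intervalIntegral.integral_neg,
    intervalIntegral.integral_const_mul] at hFTC
  simp only [G, sub_self, mul_zero] at hFTC
  linarith

lemma integral_Ioo_beta_reparam {f : ℝ → ℝ} {t β γ : ℝ} (ht : 0 < t) :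
    ∫ τ in Ioo (0 : ℝ) 1, τ ^ (β - γ) * ((f t - f (t - t * τ)) / (t * τ)) * ((1 - β) * τ ^ (-β))
      = (1 - β) * t ^ (γ - 1) * ∫ σ in (0 : ℝ)..t, (t - σ) ^ (-γ - 1) * (f t - f σ) := by
  have hpt : ∀ τ ∈ Ioo (0 : ℝ) 1,
      τ ^ (β - γ) * ((f t - f (t - t * τ)) / (t * τ)) * ((1 - β) * τ ^ (-β)) =
        (1 - β) * t ^ γ * ((t - (t - t * τ)) ^ (-γ - 1) * (f t - f (t - t * τ))) := by
    intro τ hτ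
    have hτ0 : 0 < τ := hτ.1
    rw [show t - (t - t * τ) = t * τ by ring, mul_rpow ht.le hτ0.le, rpow_sub_one ht.ne',
      rpow_sub_one hτ0.ne', rpow_neg ht.le, rpow_neg hτ0.le, rpow_sub hτ0, rpow_neg hτ0.le]
    field_simp
  rw [setIntegral_congr_fun measurableSet_Ioo hpt, integral_const_mul,
    ← integral_Ioc_eq_integral_Ioo, ← intervalIntegral.integral_of_le zero_le_one,
    intervalIntegral.integral_comp_sub_mul (fun σ => (t - σ) ^ (-γ - 1) * (f t - f σ)) ht.ne',
    rpow_sub_one ht.ne']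
  simp only [mul_one, mul_zero, sub_self, sub_zero, smul_eq_mul]
  ring

theorem stmt_13_general {γ γH t : ℝ} (hγH : γ ≤ γH) (hγH1 : γH < 1) (ht : 0 < t)
    {f f' : ℝ → ℝ}
    (hf : ∀ τ ∈ Set.Icc 0 t, HasDerivWithinAt f (f' τ) (Set.Icc 0 t) τ)
    (hf' : ContinuousOn f' (Set.Icc 0 t)) :
    (∫ τ in Set.Ioo 0 t, (t - τ) ^ (-γ) * f' τ) =
      (γ / (1 - γH)) * t ^ (1 - γ) *
          (∫ τ in Set.Ioo (0 : ℝ) 1,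
            τ ^ (γH - γ) * ((f t - f (t - t * τ)) / (t * τ)) * ((1 - γH) * τ ^ (-γH)))
        + (f t - f 0) * t ^ (-γ) := by
  have hγH1' : 1 - γH ≠ 0 := by linarith
  have ht_pow : t ^ (1 - γ) * t ^ (γ - 1) = 1 := by rw [← rpow_add ht]; simp
  rw [← integral_Ioc_eq_integral_Ioo, ← intervalIntegral.integral_of_le ht.le,
    integral_sub_rpow_mul_deriv ht.le (hγH.trans_lt hγH1) hf hf', integral_Ioo_beta_reparam ht,
    sub_zero]
  set J := ∫ σ in (0 : ℝ)..t, (t - σ) ^ (-γ - 1) * (f t - f σ)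
  field_simp
  linear_combination (-(γ * J)) * ht_pow

theorem stmt_13 {γ γH t : ℝ} (hγ : 0 < γ) (hγH : γ ≤ γH) (hγH1 : γH < 1) (ht : 0 < t)
    {f f' : ℝ → ℝ}
    (hf : ∀ τ ∈ Set.Icc 0 t, HasDerivWithinAt f (f' τ) (Set.Icc 0 t) τ)
    (hf' : ContinuousOn f' (Set.Icc 0 t)) :
    (∫ τ in Set.Ioo 0 t, (t - τ) ^ (-γ) * f' τ) =
      (γ / (1 - γH)) * t ^ (1 - γ) *
          (∫ τ in Set.Ioo (0 : ℝ) 1,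
            τ ^ (γH - γ) * ((f t - f (t - t * τ)) / (t * τ)) * ((1 - γH) * τ ^ (-γH)))
        + (f t - f 0) * t ^ (-γ) :=
  stmt_13_general hγH hγH1 ht hf hf'
end

section
/- Let d ≥ 1, 0 < α ≤ α_H < 2, λ > 0, and let u : ℝ^d → ℝ be bounded and twice continuously differentiable with bounded second derivatives. Then for every x ∈ ℝ^d, (1/2) ∫_{ℝ^d} (2u(x) − u(x−y) − u(x+y)) exp(−λ‖y‖) ‖y‖^{−(d+α)} dy = (1/2) λ^α |S^{d−1}| Γ(2−α_H) ∫_{S^{d−1}} ∫_0^∞ [(2u(x) − u(x − (r/λ)ξ) − u(x + (r/λ)ξ)) / r²] · r^{α_H−α} · q_{2−α_H}(r) dr dσ̄(ξ), where q_{2−α_H}(r) = r^{1−α_H} e^{−r} / Γ(2−α_H) is the Gamma(2−α_H, rate 1) probability density on (0,∞), σ is the surface measure on the unit sphere S^{d−1}, |S^{d−1}| = σ(S^{d−1}) = 2π^{d/2}/Γ(d/2), and σ̄ = σ/|S^{d−1}|. -/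
open MeasureTheory Real Set

/-- The surface measure on the unit sphere `S^{d-1} ⊂ ℝ^d`. -/
noncomputable def surfaceMeasure (d : ℕ) :
    Measure (Metric.sphere (0 : EuclideanSpace ℝ (Fin d)) 1) :=
  (volume : Measure (EuclideanSpace ℝ (Fin d))).toSphere

/-- `|S^{d-1}| = 2 π^{d/2} / Γ(d/2)`, the total surface measure of the unit sphere. -/
noncomputable def sphereArea (d : ℕ) : ℝ :=
  2 * Real.pi ^ ((d : ℝ) / 2) / Real.Gamma ((d : ℝ) / 2)

/-- `σ̄ = σ / |S^{d-1}|`, the uniform probability measure on the unit sphere. -/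
noncomputable def uniformSphere (d : ℕ) :
    Measure (Metric.sphere (0 : EuclideanSpace ℝ (Fin d)) 1) :=
  (ENNReal.ofReal (sphereArea d))⁻¹ • surfaceMeasure d

/-!
Pass to polar coordinates `y = r • ξ`: Haar measure becomes `σ ⊗ r^(d-1) dr`, so the tempered kernel
`e^{-λ‖y‖} ‖y‖^{-(d+α)}` becomes `e^{-λr} r^{-(1+α)}`, and the substitution `r = s/λ` pulls out
`λ^α`. On the right-hand side the factors `r^{α_H-α} / r²` and the Gamma density recombine to
`e^{-s} s^{-(1+α)} / Γ(2-α_H)`, and the normalisation of `σ̄` cancels `|S^{d-1}|`. Fubini is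
justified by `|2u(x) - u(x-y) - u(x+y)| ≤ min (2C‖y‖²) (4M)`, which makes the integrand
integrable near `0` (as `‖y‖^{2-d-α}`) and at infinity (by the exponential factor).
-/

namespace MeasureTheory

lemma integral_volumeIoiPow {F : Type*} [NormedAddCommGroup F] [NormedSpace ℝ F] (n : ℕ)
    (g : ℝ → F) :
    ∫ r : Ioi (0 : ℝ), g r ∂Measure.volumeIoiPow n = ∫ r in Ioi (0 : ℝ), r ^ n • g r := by
  simp only [Measure.volumeIoiPow, ENNReal.ofReal]
  rw [integral_withDensity_eq_integral_smul (measurable_subtype_coe.pow_const _).real_toNNReal,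
    integral_subtype_comap measurableSet_Ioi fun r ↦ (r ^ n).toNNReal • g r]
  refine setIntegral_congr_fun measurableSet_Ioi fun r hr ↦ ?_
  rw [NNReal.smul_def, Real.coe_toNNReal _ (pow_nonneg hr.out.le _)]

variable {E F : Type*} [NormedAddCommGroup E] [NormedSpace ℝ E] [FiniteDimensional ℝ E]
  [MeasurableSpace E] [BorelSpace E] [NormedAddCommGroup F] [NormedSpace ℝ F]
  [Nontrivial E] (μ : Measure E) [μ.IsAddHaarMeasure]

theorem integral_eq_integral_toSphere_integral_Ioi {f : E → F} (hf : Integrable f μ) :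
    ∫ x, f x ∂μ = ∫ ξ, (∫ r in Ioi (0 : ℝ), r ^ (Module.finrank ℝ E - 1) • f (r • (ξ : E)))
      ∂μ.toSphere := by
  have hpres := μ.measurePreserving_homeomorphUnitSphereProd
  have hpolar : ∀ y : ({0}ᶜ : Set E),
      f ((homeomorphUnitSphereProd E y).2.1 • ((homeomorphUnitSphereProd E y).1 : E)) = f y := by
    rintro ⟨y, hy⟩
    simp [smul_inv_smul₀ (norm_ne_zero_iff.mpr hy)]
  have hint : Integrable (fun p : Metric.sphere (0 : E) 1 × Ioi (0 : ℝ) ↦ f (p.2.1 • (p.1 : E)))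
      (μ.toSphere.prod (Measure.volumeIoiPow (Module.finrank ℝ E - 1))) := by
    rw [← hpres.integrable_comp_emb (Homeomorph.measurableEmbedding _)]
    simp only [Function.comp_def, hpolar]
    exact (integrableOn_iff_comap_subtypeVal (measurableSet_singleton _).compl).mp hf.integrableOn
  calc ∫ x, f x ∂μ = ∫ y : ({0}ᶜ : Set E), f y ∂μ.comap Subtype.val := by
        rw [integral_subtype_comap (measurableSet_singleton _).compl, restrict_compl_singleton]
    _ = ∫ p, f (p.2.1 • (p.1 : E)) ∂μ.toSphere.prod (Measure.volumeIoiPow _) := by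
        rw [← hpres.integral_comp (Homeomorph.measurableEmbedding _)]
        exact integral_congr_ae (ae_of_all _ fun y ↦ (hpolar y).symm)
    _ = _ := by
        rw [integral_prod _ hint]
        exact integral_congr_ae (ae_of_all _ fun ξ ↦
          integral_volumeIoiPow _ fun r ↦ f (r • (ξ : E)))

end MeasureTheory

lemma abs_two_mul_sub_sub_le_of_abs_le {G : Type*} [Add G] [Sub G] {u : G → ℝ} {M : ℝ}
    (hM : ∀ z, |u z| ≤ M) (x y : G) :
    |2 * u x - u (x - y) - u (x + y)| ≤ 4 * M := by
  have h₁ := hM x; have h₂ := hM (x - y); have h₃ := hM (x + y)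
  rw [abs_le] at *
  constructor <;> linarith

section CentralDifference

variable {E : Type*} [NormedAddCommGroup E] [NormedSpace ℝ E] {u : E → ℝ} {C : ℝ}

lemma norm_fderiv_sub_fderiv_le_of_norm_iteratedFDeriv_two_le (hu : ContDiff ℝ 2 u)
    (hC : ∀ z, ‖iteratedFDeriv ℝ 2 u z‖ ≤ C) (a b : E) :
    ‖fderiv ℝ u a - fderiv ℝ u b‖ ≤ C * ‖a - b‖ := by
  have hdiff : Differentiable ℝ (fderiv ℝ u) :=
    (hu.fderiv_right (m := 1) le_rfl).differentiable one_ne_zero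
  have hbound : ∀ z, ‖fderiv ℝ (fderiv ℝ u) z‖ ≤ C := fun z ↦ by
    rw [← norm_iteratedFDeriv_zero (𝕜 := ℝ) (f := fderiv ℝ (fderiv ℝ u)),
      norm_iteratedFDeriv_fderiv, norm_iteratedFDeriv_fderiv]
    exact hC z
  exact Convex.norm_image_sub_le_of_norm_fderiv_le (fun z _ ↦ hdiff z) (fun z _ ↦ hbound z)
    convex_univ (mem_univ b) (mem_univ a)

lemma abs_two_mul_sub_sub_le_of_norm_iteratedFDeriv_two_le (hu : ContDiff ℝ 2 u)
    (hC : ∀ z, ‖iteratedFDeriv ℝ 2 u z‖ ≤ C) (x y : E) :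
    |2 * u x - u (x - y) - u (x + y)| ≤ 2 * C * ‖y‖ ^ 2 := by
  have hC0 : 0 ≤ C := (norm_nonneg _).trans (hC x)
  have hdiff : Differentiable ℝ u := hu.differentiable two_ne_zero
  -- mean value inequality for the even part `φ` of `u` around `x`, whose derivative vanishes at `0`
  set φ : E → ℝ := fun z ↦ u (x + z) + u (x - z)
  have hφ : ∀ z, HasFDerivAt φ (fderiv ℝ u (x + z) - fderiv ℝ u (x - z)) z := fun z ↦ by
    have h₁ : HasFDerivAt (fun w ↦ u (x + w)) (fderiv ℝ u (x + z)) z := by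
      simpa [Function.comp_def] using
        (hdiff (x + z)).hasFDerivAt.comp z ((hasFDerivAt_id z).const_add x)
    have h₂ : HasFDerivAt (fun w ↦ u (x - w)) (-fderiv ℝ u (x - z)) z := by
      simpa [Function.comp_def] using
        (hdiff (x - z)).hasFDerivAt.comp z ((hasFDerivAt_id z).const_sub x)
    rw [sub_eq_add_neg]
    exact h₁.add h₂
  have hφ' : ∀ z ∈ Metric.closedBall (0 : E) ‖y‖, ‖fderiv ℝ φ z‖ ≤ 2 * C * ‖y‖ := fun z hz ↦ by
    rw [(hφ z).fderiv]
    calc ‖fderiv ℝ u (x + z) - fderiv ℝ u (x - z)‖ ≤ C * ‖(x + z) - (x - z)‖ :=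
          norm_fderiv_sub_fderiv_le_of_norm_iteratedFDeriv_two_le hu hC _ _
      _ = C * (2 * ‖z‖) := by rw [add_sub_sub_cancel, ← two_smul ℝ z, norm_smul,
          Real.norm_two]
      _ ≤ 2 * C * ‖y‖ := by nlinarith [mem_closedBall_zero_iff.mp hz]
  have hmvt := Convex.norm_image_sub_le_of_norm_fderiv_le (fun z _ ↦ (hφ z).differentiableAt)
    hφ' (convex_closedBall _ _) (Metric.mem_closedBall_self (norm_nonneg y))
    (mem_closedBall_zero_iff.mpr le_rfl)
  have hφ0 : 2 * u x - u (x - y) - u (x + y) = -(φ y - φ 0) := by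
    simp only [φ, add_zero, sub_zero]
    ring
  rw [hφ0, abs_neg, ← Real.norm_eq_abs]
  simpa [sq, mul_assoc] using hmvt

end CentralDifference

lemma pow_sub_one_mul_rpow_neg_add {n : ℕ} (hn : 1 ≤ n) {r : ℝ} (hr : 0 < r) (α : ℝ) :
    r ^ (n - 1) * r ^ (-((n : ℝ) + α)) = r ^ (-(1 + α)) := by
  rw [← Real.rpow_natCast, ← Real.rpow_add hr, Nat.cast_sub hn]
  congr 1
  push_cast
  ring

lemma integrableOn_Ioi_min_mul_exp_mul_rpow {a b lam α : ℝ} (ha : 0 ≤ a) (hb : 0 ≤ b)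
    (hlam : 0 < lam) (hα : 0 < α) (hα2 : α < 2) :
    IntegrableOn (fun r ↦ min (a * r ^ 2) b * exp (-(lam * r)) * r ^ (-(1 + α))) (Ioi 0) := by
  set F : ℝ → ℝ := fun r ↦ min (a * r ^ 2) b * exp (-(lam * r)) * r ^ (-(1 + α))
  have hcont : ContinuousOn F (Ioi 0) :=
    ContinuousOn.mul (by fun_prop) (continuousOn_id.rpow_const fun r hr ↦ Or.inl hr.out.ne')
  have hnorm : ∀ r ∈ Ioi (0 : ℝ), ‖F r‖ = F r := fun r hr ↦
    Real.norm_of_nonneg (by have := hr.out; positivity)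
  rw [← Ioc_union_Ioi_eq_Ioi zero_le_one]
  refine IntegrableOn.union ?_ ?_
  · -- near `0` the factor `a r²` tames the singularity: `F r ≤ a r^(1 - α)`
    have hdom : IntegrableOn (fun r : ℝ ↦ a * r ^ (1 - α)) (Ioc 0 1) :=
      ((intervalIntegral.intervalIntegrable_rpow' (by linarith)).const_mul a).1
    refine hdom.mono' ((hcont.mono Ioc_subset_Ioi_self).aestronglyMeasurable measurableSet_Ioc)
      ((ae_restrict_mem measurableSet_Ioc).mono fun r hr ↦ ?_)
    rw [hnorm r hr.1]
    calc min (a * r ^ 2) b * exp (-(lam * r)) * r ^ (-(1 + α))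
        ≤ a * r ^ 2 * 1 * r ^ (-(1 + α)) := by
          have hexp : exp (-(lam * r)) ≤ 1 := Real.exp_le_one_iff.mpr (by nlinarith [hr.1])
          have hpow : 0 ≤ r ^ (-(1 + α)) := Real.rpow_nonneg hr.1.le _
          gcongr
          exact min_le_left (a * r ^ 2) b
      _ = a * r ^ (1 - α) := by
          rw [mul_one, mul_assoc, ← Real.rpow_natCast, ← Real.rpow_add hr.1]
          congr 2
          push_cast
          ring
  · have hdom : IntegrableOn (fun r : ℝ ↦ b * exp (-lam * r)) (Ioi 1) :=
      (exp_neg_integrableOn_Ioi 1 hlam).const_mul b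
    refine hdom.mono' ((hcont.mono (Ioi_subset_Ioi zero_le_one)).aestronglyMeasurable
      measurableSet_Ioi) ((ae_restrict_mem measurableSet_Ioi).mono fun r hr ↦ ?_)
    have hr0 : (0 : ℝ) < r := zero_lt_one.trans hr
    rw [hnorm r hr0]
    calc min (a * r ^ 2) b * exp (-(lam * r)) * r ^ (-(1 + α))
        ≤ b * exp (-(lam * r)) * 1 := by
          have hpow : r ^ (-(1 + α)) ≤ 1 :=
            Real.rpow_le_one_of_one_le_of_nonpos hr.out.le (by linarith)
          gcongr
          exact min_le_right (a * r ^ 2) b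
      _ = b * exp (-lam * r) := by rw [mul_one, neg_mul]

lemma integral_Ioi_mul_exp_mul_rpow_eq_rpow_mul (h : ℝ → ℝ) {lam : ℝ} (hlam : 0 < lam) (α : ℝ) :
    ∫ r in Ioi 0, h r * exp (-(lam * r)) * r ^ (-(1 + α)) =
      lam ^ α * ∫ s in Ioi 0, h (s / lam) * exp (-s) * s ^ (-(1 + α)) := by
  have hscale := integral_comp_mul_left_Ioi
    (fun s ↦ h (s / lam) * exp (-s) * s ^ (-(1 + α))) 0 hlam
  rw [mul_zero, smul_eq_mul] at hscale
  have hpt : ∀ r ∈ Ioi (0 : ℝ), h r * exp (-(lam * r)) * r ^ (-(1 + α)) =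
      lam ^ (1 + α) * (h (lam * r / lam) * exp (-(lam * r)) * (lam * r) ^ (-(1 + α))) :=
    fun r hr ↦ by
      rw [mul_div_cancel_left₀ r hlam.ne', Real.mul_rpow hlam.le hr.out.le, Real.rpow_neg hlam.le]
      field_simp
  rw [setIntegral_congr_fun measurableSet_Ioi hpt, integral_const_mul, hscale, ← mul_assoc,
    ← Real.rpow_neg_one, ← Real.rpow_add hlam, add_neg_cancel_comm]

section TemperedKernel

variable {E : Type*} [NormedAddCommGroup E] [NormedSpace ℝ E] [FiniteDimensional ℝ E]
  [MeasurableSpace E] [BorelSpace E] [Nontrivial E] (μ : Measure E) [μ.IsAddHaarMeasure]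
  {lam α : ℝ}

lemma integrable_central_diff_mul_exp_mul_rpow {u : E → ℝ} {M C : ℝ} (hu : ContDiff ℝ 2 u)
    (hM : ∀ z, |u z| ≤ M) (hC : ∀ z, ‖iteratedFDeriv ℝ 2 u z‖ ≤ C) (hlam : 0 < lam)
    (hα : 0 < α) (hα2 : α < 2) (x : E) :
    Integrable (fun y ↦ (2 * u x - u (x - y) - u (x + y)) * exp (-(lam * ‖y‖)) *
      ‖y‖ ^ (-((Module.finrank ℝ E : ℝ) + α))) μ := by
  have hdom : Integrable (fun y : E ↦ min (2 * C * ‖y‖ ^ 2) (4 * M) * exp (-(lam * ‖y‖)) *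
      ‖y‖ ^ (-((Module.finrank ℝ E : ℝ) + α))) μ := by
    rw [integrable_fun_norm_addHaar μ (f := fun r ↦ min (2 * C * r ^ 2) (4 * M) *
      exp (-(lam * r)) * r ^ (-((Module.finrank ℝ E : ℝ) + α)))]
    refine (integrableOn_Ioi_min_mul_exp_mul_rpow (a := 2 * C) (b := 4 * M)
      (by linarith [(norm_nonneg _).trans (hC x)]) (by linarith [(abs_nonneg _).trans (hM x)])
      hlam hα hα2).congr_fun (fun r hr ↦ ?_) measurableSet_Ioi
    simp only [smul_eq_mul]
    rw [← pow_sub_one_mul_rpow_neg_add (Module.finrank_pos (R := ℝ) (M := E)) hr.out α]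
    ring
  have hmeas : Measurable u := hu.continuous.measurable
  refine hdom.mono' (by fun_prop) (ae_of_all _ fun y ↦ ?_)
  rw [norm_mul, norm_mul, Real.norm_eq_abs, Real.norm_of_nonneg (exp_pos _).le,
    Real.norm_of_nonneg (Real.rpow_nonneg (norm_nonneg y) _)]
  gcongr
  exact le_min (abs_two_mul_sub_sub_le_of_norm_iteratedFDeriv_two_le hu hC x y)
    (abs_two_mul_sub_sub_le_of_abs_le hM x y)

theorem integral_mul_exp_mul_rpow_eq_integral_toSphere {g : E → ℝ} (hlam : 0 < lam)
    (hg : Integrable (fun y ↦ g y * exp (-(lam * ‖y‖)) *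
      ‖y‖ ^ (-((Module.finrank ℝ E : ℝ) + α))) μ) :
    ∫ y, g y * exp (-(lam * ‖y‖)) * ‖y‖ ^ (-((Module.finrank ℝ E : ℝ) + α)) ∂μ =
      lam ^ α * ∫ ξ, (∫ s in Ioi (0 : ℝ), g ((s / lam) • (ξ : E)) * exp (-s) * s ^ (-(1 + α)))
        ∂μ.toSphere := by
  rw [integral_eq_integral_toSphere_integral_Ioi μ hg, ← integral_const_mul]
  refine integral_congr_ae (ae_of_all _ fun ξ ↦ ?_)
  have hpolar : ∀ r ∈ Ioi (0 : ℝ), r ^ (Module.finrank ℝ E - 1) • (g (r • (ξ : E)) *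
      exp (-(lam * ‖r • (ξ : E)‖)) * ‖r • (ξ : E)‖ ^ (-((Module.finrank ℝ E : ℝ) + α))) =
      g (r • (ξ : E)) * exp (-(lam * r)) * r ^ (-(1 + α)) := fun r hr ↦ by
    rw [norm_smul, norm_eq_of_mem_sphere ξ, mul_one, Real.norm_of_nonneg hr.out.le, smul_eq_mul,
      ← pow_sub_one_mul_rpow_neg_add (Module.finrank_pos (R := ℝ) (M := E)) hr.out α]
    ring
  beta_reduce
  rw [setIntegral_congr_fun measurableSet_Ioi hpolar,
    integral_Ioi_mul_exp_mul_rpow_eq_rpow_mul (fun r ↦ g (r • (ξ : E))) hlam]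

end TemperedKernel

lemma integral_Ioi_div_sq_mul_rpow_mul_gammaPDF (g : ℝ → ℝ) {α αH : ℝ} :
    ∫ r in Ioi 0, g r / r ^ 2 * r ^ (αH - α) * (r ^ (1 - αH) * exp (-r) / Gamma (2 - αH)) =
      (Gamma (2 - αH))⁻¹ * ∫ r in Ioi 0, g r * exp (-r) * r ^ (-(1 + α)) := by
  rw [← integral_const_mul]
  refine setIntegral_congr_fun measurableSet_Ioi fun r hr ↦ ?_
  have hpow : r ^ (αH - α) * r ^ (1 - αH) / r ^ 2 = r ^ (-(1 + α)) := by
    rw [← Real.rpow_add hr.out, ← Real.rpow_natCast, ← Real.rpow_sub hr.out]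
    congr 1
    push_cast
    ring
  rw [← hpow]
  ring

lemma sphereArea_pos {d : ℕ} (hd : 1 ≤ d) : 0 < sphereArea d := by
  have hd' : (0 : ℝ) < d / 2 := by positivity
  unfold sphereArea
  have := Gamma_pos_of_pos hd'
  positivity

theorem stmt_15 {d : ℕ} (hd : 1 ≤ d) {α αH lam : ℝ}
    (hα : 0 < α) (hααH : α ≤ αH) (hαH : αH < 2) (hlam : 0 < lam)
    {u : EuclideanSpace ℝ (Fin d) → ℝ} (hu : ContDiff ℝ 2 u)
    (hM : ∃ M, ∀ z, |u z| ≤ M)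
    (hC : ∃ C, ∀ z, ‖iteratedFDeriv ℝ 2 u z‖ ≤ C)
    (x : EuclideanSpace ℝ (Fin d)) :
    (1 / 2) * (∫ y : EuclideanSpace ℝ (Fin d),
        (2 * u x - u (x - y) - u (x + y)) * Real.exp (-(lam * ‖y‖)) * ‖y‖ ^ (-((d : ℝ) + α))) =
      (1 / 2) * lam ^ α * sphereArea d * Real.Gamma (2 - αH) *
        ∫ ξ : Metric.sphere (0 : EuclideanSpace ℝ (Fin d)) 1,
          (∫ r in Set.Ioi (0 : ℝ),
            ((2 * u x - u (x - (r / lam) • (ξ : EuclideanSpace ℝ (Fin d)))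
                - u (x + (r / lam) • (ξ : EuclideanSpace ℝ (Fin d)))) / r ^ 2) *
              r ^ (αH - α) * (r ^ (1 - αH) * Real.exp (-r) / Real.Gamma (2 - αH)))
          ∂(uniformSphere d) := by
  obtain ⟨M, hM⟩ := hM
  obtain ⟨C, hC⟩ := hC
  have hfinrank : Module.finrank ℝ (EuclideanSpace ℝ (Fin d)) = d := finrank_euclideanSpace_fin
  have : Nontrivial (EuclideanSpace ℝ (Fin d)) :=
    Module.nontrivial_of_finrank_pos (R := ℝ) (by rw [hfinrank]; exact hd)
  have hLHS := integral_mul_exp_mul_rpow_eq_integral_toSphere volume hlam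
    (integrable_central_diff_mul_exp_mul_rpow volume hu hM hC hlam hα (hααH.trans_lt hαH) x)
  rw [hfinrank] at hLHS
  have hΓ : Gamma (2 - αH) ≠ 0 := (Gamma_pos_of_pos (by linarith)).ne'
  simp only [integral_Ioi_div_sq_mul_rpow_mul_gammaPDF, integral_const_mul]
  rw [hLHS, uniformSphere, surfaceMeasure, integral_smul_measure, ENNReal.toReal_inv,
    ENNReal.toReal_ofReal (sphereArea_pos hd).le, smul_eq_mul]
  field_simp [(sphereArea_pos hd).ne']
end
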